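/- Pliss Lemma: Given A ≥ β > α > 0 and real numbers a_1, ..., a_N with a_i ≤ A for all i and ∑_{i=1}^N a_i ≥ βN, there exist ℓ ≥ N(β−α)/(A−α) indices 1 ≤ n_1 < ... < n_ℓ ≤ N such that ∑_{i=n+1}^{n_j} a_i ≥ α(n_j − n) for every 0 ≤ n < n_j and every j = 1, ..., ℓ. -/
import Mathlib


theorem stmt_14 (A α β : ℝ) (hα : 0 < α) (hαβ : α < β) (hβA : β ≤ A)
    (N : ℕ) (hN : 1 ≤ N) (a : ℕ → ℝ)
    (ha : ∀ i ∈ Finset.Icc 1 N, a i ≤ A)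
    (hsum : β * N ≤ ∑ i ∈ Finset.Icc 1 N, a i) :
    ∃ S : Finset ℕ, S ⊆ Finset.Icc 1 N ∧
      (N : ℝ) * (β - α) / (A - α) ≤ (S.card : ℝ) ∧
      ∀ nj ∈ S, ∀ n < nj,
        α * ((nj : ℝ) - (n : ℝ)) ≤ ∑ i ∈ Finset.Ioc n nj, a i := by
  have hAα : 0 < A - α := by linarith
  set f : ℕ → ℝ := fun n => ∑ i ∈ Finset.Ioc 0 n, (a i - α) with hf
  set M : ℕ → ℝ := fun n => Nat.rec 0 (fun k ih => max ih (f (k + 1))) n with hM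
  have hM0 : M 0 = 0 := rfl
  have hMsucc : ∀ n, M (n + 1) = max (M n) (f (n + 1)) := fun n => rfl
  have hf0 : f 0 = 0 := by simp [hf]
  have hfsucc : ∀ n, f (n + 1) = f n + (a (n + 1) - α) := by
    intro n
    simp [hf, Finset.sum_Ioc_succ_top (Nat.zero_le n)]
    ring
  have hle : ∀ k, ∀ m ≤ k, f m ≤ M k := by
    intro k
    induction k with
    | zero => intro m hm; interval_cases m; simp [hM0, hf0]
    | succ k ih =>
      intro m hm
      rcases eq_or_lt_of_le hm with h | h
      · rw [h, hMsucc]; exact le_max_right _ _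
      · rw [hMsucc]
        exact le_trans (ih m (Nat.lt_succ_iff.mp h)) (le_max_left _ _)
  set T : Finset ℕ := (Finset.Icc 1 N).filter (fun m => M (m - 1) < f m) with hT
  have hcount : ∀ n, n ≤ N →
      M n ≤ (A - α) * (((Finset.Icc 1 n).filter (fun m => M (m - 1) < f m)).card : ℝ) := by
    intro n
    induction n with
    | zero => intro _; simp [hM0]
    | succ k ih =>
      intro hkn
      have ihk := ih (le_trans (Nat.le_succ k) hkn)
      have hins : Finset.Icc 1 (k + 1) = insert (k + 1) (Finset.Icc 1 k) := by
        ext m; simp [Finset.mem_Icc]; omega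
      have hnotmem : (k + 1) ∉ Finset.Icc 1 k := by simp
      by_cases h : M k < f (k + 1)
      · have hcard : ((Finset.Icc 1 (k + 1)).filter (fun m => M (m - 1) < f m)).card
            = ((Finset.Icc 1 k).filter (fun m => M (m - 1) < f m)).card + 1 := by
          rw [hins, Finset.filter_insert, if_pos (by simpa using h),
            Finset.card_insert_of_notMem (fun hc => hnotmem (Finset.mem_of_mem_filter _ hc))]
        have hA1 : a (k + 1) ≤ A := ha _ (Finset.mem_Icc.mpr ⟨Nat.succ_le_succ (Nat.zero_le k), hkn⟩)
        have h1 : M (k + 1) = f (k + 1) := by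
          rw [hMsucc]; exact max_eq_right (le_of_lt h)
        have h2 : f (k + 1) ≤ M k + (A - α) := by
          rw [hfsucc]
          have := hle k k le_rfl
          linarith
        rw [h1, hcard]
        push_cast
        linarith
      · have h1 : M (k + 1) = M k := by
          rw [hMsucc]; exact max_eq_left (le_of_not_gt h)
        have hsub : ((Finset.Icc 1 k).filter (fun m => M (m - 1) < f m)).card
            ≤ ((Finset.Icc 1 (k + 1)).filter (fun m => M (m - 1) < f m)).card :=
          Finset.card_le_card (Finset.filter_subset_filter _
            (Finset.Icc_subset_Icc_right (Nat.le_succ k)))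
        rw [h1]
        calc M k ≤ _ := ihk
          _ ≤ _ := by exact_mod_cast mul_le_mul_of_nonneg_left (by exact_mod_cast hsub) (le_of_lt hAα)
      
  have hIcc : Finset.Icc 1 N = Finset.Ioc 0 N := Finset.Icc_add_one_left_eq_Ioc 0 N
  have hfN : (β - α) * N ≤ f N := by
    have h1 : f N = (∑ i ∈ Finset.Ioc 0 N, a i) - α * N := by
      simp [hf, Finset.sum_sub_distrib, mul_comm]
    rw [hIcc] at hsum
    rw [h1]
    linarith [hsum]
  refine ⟨T, Finset.filter_subset _ _, ?_, ?_⟩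
  · have h1 : (β - α) * N ≤ (A - α) * T.card :=
      le_trans hfN (le_trans (hle N N le_rfl) (hcount N le_rfl))
    rw [div_le_iff₀ hAα]
    linarith
  · intro nj hnj n hn
    rw [hT, Finset.mem_filter] at hnj
    obtain ⟨hnj1, hnj2⟩ := hnj
    have hn1 : n ≤ nj - 1 := Nat.le_pred_of_lt hn
    have hfn : f n < f nj := lt_of_le_of_lt (hle (nj - 1) n hn1) hnj2
    have hsplit : f n + ∑ i ∈ Finset.Ioc n nj, (a i - α) = f nj :=
      Finset.sum_Ioc_consecutive _ (Nat.zero_le n) (le_of_lt hn)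
    have hcard : (Finset.Ioc n nj).card = nj - n := Nat.card_Ioc n nj
    have : ∑ i ∈ Finset.Ioc n nj, (a i - α)
        = (∑ i ∈ Finset.Ioc n nj, a i) - α * ((nj : ℝ) - n) := by
      have hc : ((nj - n : ℕ) : ℝ) = (nj : ℝ) - n := by
        rw [Nat.cast_sub (le_of_lt hn)]
      rw [Finset.sum_sub_distrib, Finset.sum_const, hcard, nsmul_eq_mul, hc]
      ring
    nlinarith [hfn, hsplit, this]
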